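/- arXiv:1304.7589 — 2 statements merged into one kernel-verified Lean document; each statement's English description precedes it below -/
import Mathlib

section
/- For Ω(u) = (2/π)(u·arcsin(u/2) + √(4-u²)) it holds that Ω(u) ≥ |u| for all u ∈ [-2,2], with equality if and only if |u| = 2. -/
/-!
Substituting `u = 2 cos φ` with `φ ∈ [0, π]` turns `Ω(u) - u` into `(4/π)(sin φ - φ cos φ)`, which
is positive for `0 < φ < π` because `tan φ > φ` on `(0, π/2)` and `cos φ ≤ 0 ≤ sin φ` beyond.
Hence `Ω(u) > u` on `(-2, 2)`, and by evenness of `Ω` also `Ω(u) > -u`; at `u = ±2` both sides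
equal `2`.
-/

noncomputable def Omega (u : ℝ) : ℝ :=
  (2 / Real.pi) * (u * Real.arcsin (u / 2) + Real.sqrt (4 - u ^ 2))

open Real Set

lemma sin_sub_mul_cos_pos {x : ℝ} (h0 : 0 < x) (hπ : x < π) : 0 < sin x - x * cos x := by
  have hsin := sin_pos_of_pos_of_lt_pi h0 hπ
  rcases lt_or_ge x (π / 2) with hx | hx
  · have hcos : 0 < cos x := cos_pos_of_mem_Ioo ⟨by linarith, hx⟩
    have htan := lt_tan h0 hx
    rw [tan_eq_sin_div_cos, lt_div_iff₀ hcos] at htan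
    linarith
  · nlinarith [cos_nonpos_of_pi_div_two_le_of_le hx (by linarith)]

lemma Omega_neg (u : ℝ) : Omega (-u) = Omega u := by
  simp only [Omega, neg_div, arcsin_neg, neg_sq]
  ring

lemma Omega_two : Omega 2 = 2 := by
  norm_num [Omega, arcsin_one]
  field_simp

lemma Omega_sub_self {u : ℝ} (hu : u ∈ Icc (-2) 2) :
    Omega u - u = 4 / π * (sin (arccos (u / 2)) - arccos (u / 2) * cos (arccos (u / 2))) := by
  have hsqrt : √(1 - (u / 2) ^ 2) = √(4 - u ^ 2) / 2 := by
    rw [show 1 - (u / 2) ^ 2 = (4 - u ^ 2) / 2 ^ 2 by ring, sqrt_div' _ (by positivity),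
      sqrt_sq two_pos.le]
  rw [sin_arccos, cos_arccos (by linarith [hu.1]) (by linarith [hu.2]), hsqrt,
    arccos_eq_pi_div_two_sub_arcsin, Omega]
  field_simp
  ring

lemma lt_Omega {u : ℝ} (hu : u ∈ Ioo (-2) 2) : u < Omega u := by
  rw [← sub_pos, Omega_sub_self (Ioo_subset_Icc_self hu)]
  refine mul_pos (by positivity) (sin_sub_mul_cos_pos ?_ ?_)
  · exact arccos_pos.2 (by linarith [hu.2])
  · exact arccos_lt_pi.2 (by linarith [hu.1])

lemma abs_lt_Omega {u : ℝ} (hu : u ∈ Ioo (-2) 2) : |u| < Omega u := by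
  refine abs_lt.2 ⟨?_, lt_Omega hu⟩
  have := lt_Omega (u := -u) ⟨by linarith [hu.2], by linarith [hu.1]⟩
  rw [Omega_neg] at this
  linarith

lemma Omega_of_abs_eq_two {u : ℝ} (hu : |u| = 2) : Omega u = 2 := by
  rcases (abs_eq zero_le_two).1 hu with rfl | rfl
  · exact Omega_two
  · rw [Omega_neg, Omega_two]

/-- `Ω(u) ≥ |u|` for `u ∈ [-2,2]`, with equality iff `|u| = 2`. -/
theorem omega_ge_abs :
    ∀ u ∈ Set.Icc (-2 : ℝ) 2, |u| ≤ Omega u ∧ (Omega u = |u| ↔ |u| = 2) := by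
  intro u hu
  by_cases h2 : |u| = 2
  · rw [Omega_of_abs_eq_two h2, h2]
    simp
  · have hlt : |u| < 2 := (abs_le.2 hu).lt_of_ne h2
    have hΩ := abs_lt_Omega (abs_lt.1 hlt)
    exact ⟨hΩ.le, iff_of_false hΩ.ne' h2⟩
end

section
/- Fix α ∈ [0,1) and define y_α(t) = √t · (Ω(F⁻¹(α/t)) - F⁻¹(α/t))/2 for t ∈ [α, 1] (with t > 0). Then y_α is strictly increasing in t on (max(α, 0), 1]. -/
/-- The semicircle cumulative distribution function formula. -/
noncomputable def Fsc (u : ℝ) : ℝ :=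
  1 / 2 + (1 / Real.pi) * (u * Real.sqrt (4 - u ^ 2) / 4 + Real.arcsin (u / 2))

open Real Set

lemma hasDerivAt_sqrt_four_sub_sq {x : ℝ} (hx : x ^ 2 < 4) :
    HasDerivAt (fun u : ℝ => √(4 - u ^ 2)) (-x / √(4 - x ^ 2)) x := by
  have hpos : (0 : ℝ) < √(4 - x ^ 2) := sqrt_pos.mpr (by linarith)
  refine (((hasDerivAt_pow 2 x).const_sub 4).sqrt (by linarith)).congr_deriv ?_
  field_simp
  ring

lemma hasDerivAt_arcsin_div_two {x : ℝ} (hx : x ^ 2 < 4) :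
    HasDerivAt (fun u : ℝ => arcsin (u / 2)) (1 / √(4 - x ^ 2)) x := by
  have h1 : x / 2 ≠ -1 := by intro h; nlinarith
  have h2 : x / 2 ≠ 1 := by intro h; nlinarith
  refine ((hasDerivAt_arcsin h1 h2).comp x ((hasDerivAt_id x).div_const 2)).congr_deriv ?_
  have hsqrt : √(1 - (x / 2) ^ 2) = √(4 - x ^ 2) / 2 := by
    rw [show (1 : ℝ) - (x / 2) ^ 2 = (4 - x ^ 2) / 4 by ring, sqrt_div' _ (by norm_num : (0:ℝ) ≤ 4),
      show (4 : ℝ) = 2 ^ 2 by norm_num, sqrt_sq (by norm_num)]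
  have hpos : (0 : ℝ) < √(4 - x ^ 2) := sqrt_pos.mpr (by linarith)
  rw [hsqrt]
  field_simp

lemma hasDerivAt_Fsc {x : ℝ} (hx : x ^ 2 < 4) :
    HasDerivAt Fsc (√(4 - x ^ 2) / (2 * π)) x := by
  have hpos : (0 : ℝ) < √(4 - x ^ 2) := sqrt_pos.mpr (by linarith)
  have hsq : √(4 - x ^ 2) ^ 2 = 4 - x ^ 2 := sq_sqrt (by linarith)
  refine (((((hasDerivAt_id x).mul (hasDerivAt_sqrt_four_sub_sq hx)).div_const 4).add
    (hasDerivAt_arcsin_div_two hx)).const_mul (1 / π)).const_add (1 / 2) |>.congr_deriv ?_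
  field_simp
  simp only [id]
  linear_combination (-2) * hsq

lemma hasDerivAt_Omega {x : ℝ} (hx : x ^ 2 < 4) :
    HasDerivAt Omega (2 / π * arcsin (x / 2)) x := by
  have hpos : (0 : ℝ) < √(4 - x ^ 2) := sqrt_pos.mpr (by linarith)
  refine ((((hasDerivAt_id x).mul (hasDerivAt_arcsin_div_two hx)).add
    (hasDerivAt_sqrt_four_sub_sq hx)).const_mul (2 / π)).congr_deriv ?_
  field_simp
  simp only [id]
  ring

lemma sq_lt_four_of_mem_interior {x : ℝ} (hx : x ∈ interior (Icc (-2 : ℝ) 2)) : x ^ 2 < 4 := by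
  rw [interior_Icc] at hx
  nlinarith [hx.1, hx.2]

lemma Fsc_strictMonoOn : StrictMonoOn Fsc (Icc (-2) 2) := by
  refine strictMonoOn_of_deriv_pos (convex_Icc _ _) (by unfold Fsc; fun_prop) fun x hx => ?_
  have hx := sq_lt_four_of_mem_interior hx
  rw [(hasDerivAt_Fsc hx).deriv]
  have := pi_pos
  have : (0 : ℝ) < √(4 - x ^ 2) := sqrt_pos.mpr (by linarith)
  positivity

lemma Omega_sub_id_strictAntiOn : StrictAntiOn (fun u => Omega u - u) (Icc (-2) 2) := by
  refine strictAntiOn_of_deriv_neg (convex_Icc _ _) (by unfold Omega; fun_prop) fun x hx => ?_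
  have hx2 := sq_lt_four_of_mem_interior hx
  rw [interior_Icc] at hx
  have hderiv : HasDerivAt (fun u => Omega u - u) (2 / π * arcsin (x / 2) - 1) x :=
    (hasDerivAt_Omega hx2).sub (hasDerivAt_id x)
  rw [hderiv.deriv, sub_neg, div_mul_eq_mul_div, div_lt_one pi_pos]
  linarith [arcsin_lt_pi_div_two.mpr (show x / 2 < 1 by linarith [hx.2])]

lemma Fsc_two : Fsc 2 = 1 := by
  have := pi_pos
  norm_num [Fsc]
  field_simp
  ring

lemma StrictMonoOn.strictMonoOn_of_rightInvOn {α β : Type*} [LinearOrder α] [LinearOrder β]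
    {f : α → β} {g : β → α} {s : Set α} {t : Set β} (hf : StrictMonoOn f s)
    (hg : MapsTo g t s) (hfg : RightInvOn g f t) : StrictMonoOn g t := by
  intro a ha b hb hab
  by_contra! hba
  have := (hf.le_iff_le (hg hb) (hg ha)).mpr hba
  rw [hfg ha, hfg hb] at this
  exact hab.not_ge this

section Finv

variable {Finv : ℝ → ℝ} (hFinv_mem : MapsTo Finv (Icc 0 1) (Icc (-2) 2))
  (hFinv_right : RightInvOn Finv Fsc (Icc 0 1))
include hFinv_mem hFinv_right

lemma Finv_one : Finv 1 = 2 := by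
  refine Fsc_strictMonoOn.injOn (hFinv_mem ⟨zero_le_one, le_rfl⟩) ⟨by norm_num, le_rfl⟩ ?_
  rw [hFinv_right ⟨zero_le_one, le_rfl⟩, Fsc_two]

lemma Omega_sub_Finv_strictAntiOn :
    StrictAntiOn (fun a => Omega (Finv a) - Finv a) (Icc 0 1) :=
  Omega_sub_id_strictAntiOn.comp_strictMonoOn
    (Fsc_strictMonoOn.strictMonoOn_of_rightInvOn hFinv_mem hFinv_right) hFinv_mem

lemma Omega_sub_Finv_pos {a : ℝ} (ha : a ∈ Ico 0 1) : 0 < Omega (Finv a) - Finv a := by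
  have := Omega_sub_Finv_strictAntiOn hFinv_mem hFinv_right (Ico_subset_Icc_self ha)
    ⟨zero_le_one, le_rfl⟩ ha.2
  simpa only [Finv_one hFinv_mem hFinv_right, Omega_two, sub_self] using this

end Finv

theorem yAlpha_strictMonoOn_general (Finv : ℝ → ℝ)
    (hFinv_mem : ∀ a ∈ Set.Icc (0 : ℝ) 1, Finv a ∈ Set.Icc (-2 : ℝ) 2)
    (hFinv_right : ∀ a ∈ Set.Icc (0 : ℝ) 1, Fsc (Finv a) = a)
    (α : ℝ) (hα : α ∈ Set.Ico (0 : ℝ) 1) :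
    StrictMonoOn (fun t => Real.sqrt t * (Omega (Finv (α / t)) - Finv (α / t)) / 2)
      (Set.Ioc (max α 0) 1) := by
  intro t ht t' _ htt'
  have ht0 : 0 < t := (le_max_right α 0).trans_lt ht.1
  have hαt : α < t := (le_max_left α 0).trans_lt ht.1
  have hα_div_mem {s : ℝ} (hts : t ≤ s) : α / s ∈ Ico 0 1 :=
    ⟨div_nonneg hα.1 (ht0.trans_le hts).le, (div_lt_one (ht0.trans_le hts)).mpr (hαt.trans_le hts)⟩
  have hY_pos := Omega_sub_Finv_pos hFinv_mem hFinv_right (hα_div_mem le_rfl)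
  have hY_le : Omega (Finv (α / t)) - Finv (α / t) ≤ Omega (Finv (α / t')) - Finv (α / t') :=
    (Omega_sub_Finv_strictAntiOn hFinv_mem hFinv_right).antitoneOn
      (Ico_subset_Icc_self (hα_div_mem htt'.le)) (Ico_subset_Icc_self (hα_div_mem le_rfl))
      (div_le_div_of_nonneg_left hα.1 ht0 htt'.le)
  calc √t * (Omega (Finv (α / t)) - Finv (α / t)) / 2
      < √t' * (Omega (Finv (α / t)) - Finv (α / t)) / 2 := by gcongr
    _ ≤ √t' * (Omega (Finv (α / t')) - Finv (α / t')) / 2 := by gcongr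

/-- For fixed `α ∈ [0,1)`, the function `y_α(t) = √t · (Ω(F⁻¹(α/t)) - F⁻¹(α/t))/2` is
strictly increasing in `t` on `(max(α,0), 1]`. -/
theorem yAlpha_strictMonoOn (Finv : ℝ → ℝ)
    (hFinv_mem : ∀ a ∈ Set.Icc (0 : ℝ) 1, Finv a ∈ Set.Icc (-2 : ℝ) 2)
    (hFinv_right : ∀ a ∈ Set.Icc (0 : ℝ) 1, Fsc (Finv a) = a)
    (hFinv_left : ∀ u ∈ Set.Icc (-2 : ℝ) 2, Finv (Fsc u) = u)
    (α : ℝ) (hα : α ∈ Set.Ico (0 : ℝ) 1) :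
    StrictMonoOn (fun t => Real.sqrt t * (Omega (Finv (α / t)) - Finv (α / t)) / 2)
      (Set.Ioc (max α 0) 1) :=
  yAlpha_strictMonoOn_general Finv hFinv_mem hFinv_right α hα
end
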